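/- With the dual (tilde) operators of the Langlands-dual type-C₂ representation defined in the context, for all i, j ∈ {1,2} the following operator identities hold on the space of all functions ℂ⁴ → ℂ: K̃_i ∘ ẽ_j = q̃_i^{ã_ij} · ẽ_j ∘ K̃_i and K̃_i ∘ f̃_j = q̃_i^{−ã_ij} · f̃_j ∘ K̃_i, where (ã_ij) is the C₂ Cartan matrix ã₁₁ = ã₂₂ = 2, ã₁₂ = −1, ã₂₁ = −2. -/
import Mathlib


noncomputable section

open Complex

/-- The space of operators on all functions `ℂ⁴ → ℂ`. -/
abbrev OpB : Type := Module.End ℂ ((Fin 4 → ℂ) → ℂ)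

/-- Weyl operator `W(ℓ,δ)`: `(W(ℓ,δ) f)(x) = exp(ℓ(x + δ/2)) · f(x + δ)`. -/
def Wop (ℓ : (Fin 4 → ℂ) → ℂ) (δ : Fin 4 → ℂ) : OpB where
  toFun f := fun x => Complex.exp (ℓ (x + (2 : ℂ)⁻¹ • δ)) * f (x + δ)
  map_add' f g := by funext x; simp [mul_add]
  map_smul' c f := by funext x; simp [smul_eq_mul]; ring

/-- `b_s = b/√2`. -/
def bs (b : ℝ) : ℝ := b / Real.sqrt 2

/-- `q = exp(π i b²)`. -/
def qq (b : ℝ) : ℂ := Complex.exp ((Real.pi : ℂ) * Complex.I * (b : ℂ) ^ 2)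

/-- `q_s = exp(π i b_s²)`. -/
def qs (b : ℝ) : ℂ := Complex.exp ((Real.pi : ℂ) * Complex.I * ((bs b : ℝ) : ℂ) ^ 2)

/-- The affine functional `ℓ_α = π (b_s (ct·t + cv·v + cl1·λ₁) + b (cu·u + cw·w + cl2·λ₂))`,
where `(t,u,v,w) = (x 0, x 1, x 2, x 3)`. -/
def ellB (b lam1 lam2 ct cu cv cw cl1 cl2 : ℝ) : (Fin 4 → ℂ) → ℂ := fun x =>
  (Real.pi : ℂ) * (((bs b : ℝ) : ℂ) * (ct * x 0 + cv * x 2 + cl1 * lam1)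
    + (b : ℂ) * (cu * x 1 + cw * x 3 + cl2 * lam2))

/-- The shift vector `δ = (−i b_s d_t, −i b d_u, −i b_s d_v, −i b d_w)`. -/
def deltaB (b dt du dv dw : ℝ) : Fin 4 → ℂ :=
  ![-Complex.I * ((bs b : ℝ) : ℂ) * dt, -Complex.I * (b : ℂ) * du,
    -Complex.I * ((bs b : ℝ) : ℂ) * dv, -Complex.I * (b : ℂ) * dw]

/-- The operator `[α]e(d_t p_t + d_u p_u + d_v p_v + d_w p_w) = W(ℓ_α,δ) + W(−ℓ_α,δ)`. -/
def brB (b lam1 lam2 ct cu cv cw cl1 cl2 dt du dv dw : ℝ) : OpB :=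
  Wop (ellB b lam1 lam2 ct cu cv cw cl1 cl2) (deltaB b dt du dv dw)
    + Wop (fun x => -(ellB b lam1 lam2 ct cu cv cw cl1 cl2 x)) (deltaB b dt du dv dw)

/-- `K₁ = W(π(b_s(2λ₁−2t−2v) + b(u+w)), 0)`. -/
def K1 (b lam1 lam2 : ℝ) : OpB := Wop (ellB b lam1 lam2 (-2) 1 (-2) 1 2 0) 0

/-- `K₁⁻¹`, the multiplication operator with negated exponent. -/
def K1inv (b lam1 lam2 : ℝ) : OpB := Wop (ellB b lam1 lam2 2 (-1) 2 (-1) (-2) 0) 0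

/-- `K₂ = W(π(b(2λ₂−2u−2w) + b_s(2t+2v)), 0)`. -/
def K2 (b lam1 lam2 : ℝ) : OpB := Wop (ellB b lam1 lam2 2 (-2) 2 (-2) 0 2) 0

/-- `K₂⁻¹`, the multiplication operator with negated exponent. -/
def K2inv (b lam1 lam2 : ℝ) : OpB := Wop (ellB b lam1 lam2 (-2) 2 (-2) 2 0 (-2)) 0

/-- `q̃₁ = exp(π i b_s⁻²)`. -/
def qt1 (b : ℝ) : ℂ := Complex.exp ((Real.pi : ℂ) * Complex.I * (((bs b)⁻¹ : ℝ) : ℂ) ^ 2)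

/-- `q̃₂ = exp(π i b⁻²)`. -/
def qt2 (b : ℝ) : ℂ := Complex.exp ((Real.pi : ℂ) * Complex.I * ((b⁻¹ : ℝ) : ℂ) ^ 2)

/-- The affine functional
`ℓ̃_α = π (b_s⁻¹ (ct·t + cv·v + cl1·λ₁) + b⁻¹ (cu·u + cw·w + cl2·λ₂))`. -/
def ellBs (b lam1 lam2 ct cu cv cw cl1 cl2 : ℝ) : (Fin 4 → ℂ) → ℂ := fun x =>
  (Real.pi : ℂ) * ((((bs b)⁻¹ : ℝ) : ℂ) * (ct * x 0 + cv * x 2 + cl1 * lam1)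
    + ((b⁻¹ : ℝ) : ℂ) * (cu * x 1 + cw * x 3 + cl2 * lam2))

/-- The starred shift vector `δ̃ = (−i b_s⁻¹ d_t, −i b⁻¹ d_u, −i b_s⁻¹ d_v, −i b⁻¹ d_w)`. -/
def deltaBs (b dt du dv dw : ℝ) : Fin 4 → ℂ :=
  ![-Complex.I * (((bs b)⁻¹ : ℝ) : ℂ) * dt, -Complex.I * ((b⁻¹ : ℝ) : ℂ) * du,
    -Complex.I * (((bs b)⁻¹ : ℝ) : ℂ) * dv, -Complex.I * ((b⁻¹ : ℝ) : ℂ) * dw]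

/-- The starred operator `[α]_*e_*(·) = W(ℓ̃_α,δ̃) + W(−ℓ̃_α,δ̃)`. -/
def brBs (b lam1 lam2 ct cu cv cw cl1 cl2 dt du dv dw : ℝ) : OpB :=
  Wop (ellBs b lam1 lam2 ct cu cv cw cl1 cl2) (deltaBs b dt du dv dw)
    + Wop (fun x => -(ellBs b lam1 lam2 ct cu cv cw cl1 cl2 x)) (deltaBs b dt du dv dw)

/-- `ẽ₁ = [2u−v]_*e_*(2p_w−p_v−2p_u) + (q̃₂+q̃₂⁻¹)[u−w]_*e_*(p_w−p_v−p_u)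
  + [v−2w]_*e_*(−p_v) + [t]_*e_*(2p_w−2p_u−p_t)`. -/
def et1 (b lam1 lam2 : ℝ) : OpB :=
  brBs b lam1 lam2 0 2 (-1) 0 0 0 0 (-2) (-1) 2
    + (qt2 b + (qt2 b)⁻¹) • brBs b lam1 lam2 0 1 0 (-1) 0 0 0 (-1) (-1) 1
    + brBs b lam1 lam2 0 0 1 (-2) 0 0 0 0 (-1) 0
    + brBs b lam1 lam2 1 0 0 0 0 0 (-1) (-2) 0 2

/-- `ẽ₂ = [w]_*e_*(−p_w)`. -/
def et2 (b lam1 lam2 : ℝ) : OpB := brBs b lam1 lam2 0 0 0 1 0 0 0 0 0 (-1)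

/-- `f̃₁ = [2λ₁−t]_*e_*(p_t) + [2λ₁−2t+2u−v]_*e_*(p_v)`. -/
def ft1 (b lam1 lam2 : ℝ) : OpB :=
  brBs b lam1 lam2 (-1) 0 0 0 2 0 1 0 0 0
    + brBs b lam1 lam2 (-2) 2 (-1) 0 2 0 0 0 1 0

/-- `f̃₂ = [2λ₂+t−u]_*e_*(p_u) + [2λ₂+t−2u+v−w]_*e_*(p_w)`. -/
def ft2 (b lam1 lam2 : ℝ) : OpB :=
  brBs b lam1 lam2 1 (-1) 0 0 0 2 0 1 0 0
    + brBs b lam1 lam2 1 (-2) 1 (-1) 0 2 0 0 0 1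

/-- `K̃₁ = W(π(b_s⁻¹(2λ₁−2t−2v) + 2b⁻¹(u+w)), 0)`. -/
def Kt1 (b lam1 lam2 : ℝ) : OpB := Wop (ellBs b lam1 lam2 (-2) 2 (-2) 2 2 0) 0

/-- `K̃₁⁻¹`, the multiplication operator with negated exponent. -/
def Kt1inv (b lam1 lam2 : ℝ) : OpB := Wop (ellBs b lam1 lam2 2 (-2) 2 (-2) (-2) 0) 0

/-- `K̃₂ = W(π(b⁻¹(2λ₂−2u−2w) + b_s⁻¹(t+v)), 0)`. -/
def Kt2 (b lam1 lam2 : ℝ) : OpB := Wop (ellBs b lam1 lam2 1 (-2) 1 (-2) 0 2) 0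

/-- `K̃₂⁻¹`, the multiplication operator with negated exponent. -/
def Kt2inv (b lam1 lam2 : ℝ) : OpB := Wop (ellBs b lam1 lam2 (-1) 2 (-1) 2 0 (-2)) 0

/-- The C₂ Cartan matrix `ã₁₁ = ã₂₂ = 2, ã₁₂ = −1, ã₂₁ = −2`. -/
def aC : Fin 2 → Fin 2 → ℤ := ![![2, -1], ![-2, 2]]

/-- `q̃₁, q̃₂`. -/
def qti (b : ℝ) : Fin 2 → ℂ := ![qt1 b, qt2 b]

lemma Wcomm (ℓ0 ℓ : (Fin 4 → ℂ) → ℂ) (δ : Fin 4 → ℂ) (μ : ℂ)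
    (h : ∀ x, ℓ0 x = μ + ℓ0 (x + δ)) :
    Wop ℓ0 0 * Wop ℓ δ = Complex.exp μ • (Wop ℓ δ * Wop ℓ0 0) := by
  apply LinearMap.ext; intro f; funext x
  simp only [Module.End.mul_apply, LinearMap.smul_apply, Wop, LinearMap.coe_mk, AddHom.coe_mk,
    smul_zero, add_zero, Pi.smul_apply, smul_eq_mul]
  rw [h x, Complex.exp_add]; ring

lemma ellBs_shift (b lam1 lam2 ct cu cv cw cl1 cl2 dt du dv dw : ℝ) (x : Fin 4 → ℂ) :
    ellBs b lam1 lam2 ct cu cv cw cl1 cl2 x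
      = (Real.pi : ℂ) * Complex.I * ((((bs b)⁻¹ : ℝ) : ℂ) ^ 2 * (ct * dt + cv * dv)
          + ((b⁻¹ : ℝ) : ℂ) ^ 2 * (cu * du + cw * dw))
        + ellBs b lam1 lam2 ct cu cv cw cl1 cl2 (x + deltaBs b dt du dv dw) := by
  simp only [ellBs, deltaBs, Pi.add_apply, Matrix.cons_val_zero, Matrix.cons_val_one,
    Matrix.head_cons, Matrix.cons_val_two, Matrix.tail_cons, Matrix.cons_val_three]
  ring

lemma Kbr (b lam1 lam2 Kct Kcu Kcv Kcw Kl1 Kl2 ct cu cv cw cl1 cl2 dt du dv dw : ℝ) (c : ℂ)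
    (hc : Complex.exp ((Real.pi : ℂ) * Complex.I * ((((bs b)⁻¹ : ℝ) : ℂ) ^ 2 * (Kct * dt + Kcv * dv)
          + ((b⁻¹ : ℝ) : ℂ) ^ 2 * (Kcu * du + Kcw * dw))) = c) :
    Wop (ellBs b lam1 lam2 Kct Kcu Kcv Kcw Kl1 Kl2) 0
        * brBs b lam1 lam2 ct cu cv cw cl1 cl2 dt du dv dw
      = c • (brBs b lam1 lam2 ct cu cv cw cl1 cl2 dt du dv dw
          * Wop (ellBs b lam1 lam2 Kct Kcu Kcv Kcw Kl1 Kl2) 0) := by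
  have h := ellBs_shift b lam1 lam2 Kct Kcu Kcv Kcw Kl1 Kl2 dt du dv dw
  unfold brBs
  rw [mul_add, add_mul, Wcomm _ _ _ _ h, Wcomm _ _ _ _ h, hc, smul_add]

lemma bs_inv_sq (b : ℝ) : ((((bs b)⁻¹ : ℝ)) : ℂ) ^ 2 = 2 * ((b⁻¹ : ℝ) : ℂ) ^ 2 := by
  have h : ((bs b)⁻¹ : ℝ) ^ 2 = 2 * (b⁻¹ : ℝ) ^ 2 := by
    rw [bs, inv_div, div_pow, Real.sq_sqrt (by norm_num : (0:ℝ) ≤ 2), div_eq_mul_inv, inv_pow]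
  exact_mod_cast h

lemma KE11 (b lam1 lam2 : ℝ) :
    Kt1 b lam1 lam2 * et1 b lam1 lam2
      = (qt1 b ^ (2:ℤ)) • (et1 b lam1 lam2 * Kt1 b lam1 lam2) := by
  have hA := Kbr b lam1 lam2 (-2) 2 (-2) 2 2 0 0 2 (-1) 0 0 0 0 (-2) (-1) 2 (qt1 b ^ (2:ℤ))
    (by rw [qt1, ← Complex.exp_int_mul]; congr 1; rw [bs_inv_sq]; push_cast; ring)
  have hB := Kbr b lam1 lam2 (-2) 2 (-2) 2 2 0 0 1 0 (-1) 0 0 0 (-1) (-1) 1 (qt1 b ^ (2:ℤ))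
    (by rw [qt1, ← Complex.exp_int_mul]; congr 1; rw [bs_inv_sq]; push_cast; ring)
  have hC := Kbr b lam1 lam2 (-2) 2 (-2) 2 2 0 0 0 1 (-2) 0 0 0 0 (-1) 0 (qt1 b ^ (2:ℤ))
    (by rw [qt1, ← Complex.exp_int_mul]; congr 1; rw [bs_inv_sq]; push_cast; ring)
  have hD := Kbr b lam1 lam2 (-2) 2 (-2) 2 2 0 1 0 0 0 0 0 (-1) (-2) 0 2 (qt1 b ^ (2:ℤ))
    (by rw [qt1, ← Complex.exp_int_mul]; congr 1; rw [bs_inv_sq]; push_cast; ring)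
  unfold Kt1 et1
  simp only [mul_add, add_mul, mul_smul_comm, smul_mul_assoc, hA, hB, hC, hD, smul_add, smul_smul]
  module

lemma KE12 (b lam1 lam2 : ℝ) :
    Kt1 b lam1 lam2 * et2 b lam1 lam2
      = (qt1 b ^ (-1:ℤ)) • (et2 b lam1 lam2 * Kt1 b lam1 lam2) := by
  have hA := Kbr b lam1 lam2 (-2) 2 (-2) 2 2 0 0 0 0 1 0 0 0 0 0 (-1) (qt1 b ^ (-1:ℤ))
    (by rw [qt1, ← Complex.exp_int_mul]; congr 1; rw [bs_inv_sq]; push_cast; ring)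
  unfold Kt1 et2
  simp only [hA]

lemma KF11 (b lam1 lam2 : ℝ) :
    Kt1 b lam1 lam2 * ft1 b lam1 lam2
      = (qt1 b ^ (-2:ℤ)) • (ft1 b lam1 lam2 * Kt1 b lam1 lam2) := by
  have hE := Kbr b lam1 lam2 (-2) 2 (-2) 2 2 0 (-1) 0 0 0 2 0 1 0 0 0 (qt1 b ^ (-2:ℤ))
    (by rw [qt1, ← Complex.exp_int_mul]; congr 1; rw [bs_inv_sq]; push_cast; ring)
  have hF := Kbr b lam1 lam2 (-2) 2 (-2) 2 2 0 (-2) 2 (-1) 0 2 0 0 0 1 0 (qt1 b ^ (-2:ℤ))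
    (by rw [qt1, ← Complex.exp_int_mul]; congr 1; rw [bs_inv_sq]; push_cast; ring)
  unfold Kt1 ft1
  simp only [mul_add, add_mul, smul_mul_assoc, hE, hF, smul_add]

lemma KF12 (b lam1 lam2 : ℝ) :
    Kt1 b lam1 lam2 * ft2 b lam1 lam2
      = (qt1 b ^ (1:ℤ)) • (ft2 b lam1 lam2 * Kt1 b lam1 lam2) := by
  have hG := Kbr b lam1 lam2 (-2) 2 (-2) 2 2 0 1 (-1) 0 0 0 2 0 1 0 0 (qt1 b ^ (1:ℤ))
    (by rw [qt1, ← Complex.exp_int_mul]; congr 1; rw [bs_inv_sq]; push_cast; ring)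
  have hH := Kbr b lam1 lam2 (-2) 2 (-2) 2 2 0 1 (-2) 1 (-1) 0 2 0 0 0 1 (qt1 b ^ (1:ℤ))
    (by rw [qt1, ← Complex.exp_int_mul]; congr 1; rw [bs_inv_sq]; push_cast; ring)
  unfold Kt1 ft2
  simp only [mul_add, add_mul, smul_mul_assoc, hG, hH, smul_add]

lemma KE21 (b lam1 lam2 : ℝ) :
    Kt2 b lam1 lam2 * et1 b lam1 lam2
      = (qt2 b ^ (-2:ℤ)) • (et1 b lam1 lam2 * Kt2 b lam1 lam2) := by
  have hA := Kbr b lam1 lam2 1 (-2) 1 (-2) 0 2 0 2 (-1) 0 0 0 0 (-2) (-1) 2 (qt2 b ^ (-2:ℤ))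
    (by rw [qt2, ← Complex.exp_int_mul]; congr 1; rw [bs_inv_sq]; push_cast; ring)
  have hB := Kbr b lam1 lam2 1 (-2) 1 (-2) 0 2 0 1 0 (-1) 0 0 0 (-1) (-1) 1 (qt2 b ^ (-2:ℤ))
    (by rw [qt2, ← Complex.exp_int_mul]; congr 1; rw [bs_inv_sq]; push_cast; ring)
  have hC := Kbr b lam1 lam2 1 (-2) 1 (-2) 0 2 0 0 1 (-2) 0 0 0 0 (-1) 0 (qt2 b ^ (-2:ℤ))
    (by rw [qt2, ← Complex.exp_int_mul]; congr 1; rw [bs_inv_sq]; push_cast; ring)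
  have hD := Kbr b lam1 lam2 1 (-2) 1 (-2) 0 2 1 0 0 0 0 0 (-1) (-2) 0 2 (qt2 b ^ (-2:ℤ))
    (by rw [qt2, ← Complex.exp_int_mul]; congr 1; rw [bs_inv_sq]; push_cast; ring)
  unfold Kt2 et1
  simp only [mul_add, add_mul, mul_smul_comm, smul_mul_assoc, hA, hB, hC, hD, smul_add, smul_smul]
  module

lemma KE22 (b lam1 lam2 : ℝ) :
    Kt2 b lam1 lam2 * et2 b lam1 lam2
      = (qt2 b ^ (2:ℤ)) • (et2 b lam1 lam2 * Kt2 b lam1 lam2) := by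
  have hA := Kbr b lam1 lam2 1 (-2) 1 (-2) 0 2 0 0 0 1 0 0 0 0 0 (-1) (qt2 b ^ (2:ℤ))
    (by rw [qt2, ← Complex.exp_int_mul]; congr 1; rw [bs_inv_sq]; push_cast; ring)
  unfold Kt2 et2
  simp only [hA]

lemma KF21 (b lam1 lam2 : ℝ) :
    Kt2 b lam1 lam2 * ft1 b lam1 lam2
      = (qt2 b ^ (2:ℤ)) • (ft1 b lam1 lam2 * Kt2 b lam1 lam2) := by
  have hE := Kbr b lam1 lam2 1 (-2) 1 (-2) 0 2 (-1) 0 0 0 2 0 1 0 0 0 (qt2 b ^ (2:ℤ))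
    (by rw [qt2, ← Complex.exp_int_mul]; congr 1; rw [bs_inv_sq]; push_cast; ring)
  have hF := Kbr b lam1 lam2 1 (-2) 1 (-2) 0 2 (-2) 2 (-1) 0 2 0 0 0 1 0 (qt2 b ^ (2:ℤ))
    (by rw [qt2, ← Complex.exp_int_mul]; congr 1; rw [bs_inv_sq]; push_cast; ring)
  unfold Kt2 ft1
  simp only [mul_add, add_mul, smul_mul_assoc, hE, hF, smul_add]

lemma KF22 (b lam1 lam2 : ℝ) :
    Kt2 b lam1 lam2 * ft2 b lam1 lam2
      = (qt2 b ^ (-2:ℤ)) • (ft2 b lam1 lam2 * Kt2 b lam1 lam2) := by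
  have hG := Kbr b lam1 lam2 1 (-2) 1 (-2) 0 2 1 (-1) 0 0 0 2 0 1 0 0 (qt2 b ^ (-2:ℤ))
    (by rw [qt2, ← Complex.exp_int_mul]; congr 1; rw [bs_inv_sq]; push_cast; ring)
  have hH := Kbr b lam1 lam2 1 (-2) 1 (-2) 0 2 1 (-2) 1 (-1) 0 2 0 0 0 1 (qt2 b ^ (-2:ℤ))
    (by rw [qt2, ← Complex.exp_int_mul]; congr 1; rw [bs_inv_sq]; push_cast; ring)
  unfold Kt2 ft2
  simp only [mul_add, add_mul, smul_mul_assoc, hG, hH, smul_add]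

/-- `K̃_i ẽ_j = q̃_i^{ã_ij} ẽ_j K̃_i` and `K̃_i f̃_j = q̃_i^{−ã_ij} f̃_j K̃_i`
for the Langlands-dual type-C₂ representation. -/
theorem C2dual_K_relations (b lam1 lam2 : ℝ) (hb0 : 0 < b) (hb1 : b < 1)
    (hirr : Irrational (b ^ 2)) : ∀ i j : Fin 2,
    ![Kt1 b lam1 lam2, Kt2 b lam1 lam2] i * ![et1 b lam1 lam2, et2 b lam1 lam2] j
      = (qti b i ^ (aC i j)) •
        (![et1 b lam1 lam2, et2 b lam1 lam2] j * ![Kt1 b lam1 lam2, Kt2 b lam1 lam2] i) ∧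
    ![Kt1 b lam1 lam2, Kt2 b lam1 lam2] i * ![ft1 b lam1 lam2, ft2 b lam1 lam2] j
      = (qti b i ^ (-(aC i j))) •
        (![ft1 b lam1 lam2, ft2 b lam1 lam2] j * ![Kt1 b lam1 lam2, Kt2 b lam1 lam2] i) := by
  intro i j
  fin_cases i <;> fin_cases j <;>
    refine ⟨?_, ?_⟩ <;>
    simp only [Matrix.cons_val_zero, Matrix.cons_val_one, Matrix.head_cons, qti, aC,
      Matrix.cons_val', Matrix.empty_val', Matrix.cons_val_fin_one, Fin.isValue, neg_neg]
  · exact KE11 b lam1 lam2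
  · exact KF11 b lam1 lam2
  · exact KE12 b lam1 lam2
  · exact KF12 b lam1 lam2
  · exact KE21 b lam1 lam2
  · exact KF21 b lam1 lam2
  · exact KE22 b lam1 lam2
  · exact KF22 b lam1 lam2

end
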